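/- arXiv:2604.14108 — 5 statements merged into one kernel-verified Lean document; each statement's English description precedes it below -/
import Mathlib

section
/- Let β ∈ ℝ, η ∈ ℝ, and let (h_t)_{t≥2} be i.i.d. square-integrable real random variables with mean a and variance σ_b², and let (x_t)_{t≥0} be square-integrable real random variables satisfying x_t = (1 + β − η·h_t)·x_{t−1} − β·x_{t−2} for t ≥ 2, with h_t independent of the pair (x_{t−1}, x_{t−2}). Define w_t := (E[x_t²], E[x_t·x_{t−1}], E[x_{t−1}²])ᵀ ∈ ℝ³. Then for all t ≥ 2, w_t = R(η)·w_{t−1}, where R(η) is the 3×3 matrix with rows (α₂, −2β·α₁, β²), (α₁, −β, 0), (1, 0, 0), α₁ := 1 + β − η·a and α₂ := α₁² + η²·σ_b². -/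
open MeasureTheory ProbabilityTheory

lemma integrable_mul_of_memL2 {Ω : Type*} [MeasurableSpace Ω] {μ : Measure Ω}
    {f g : Ω → ℝ} (hf : MemLp f 2 μ) (hg : MemLp g 2 μ) :
    Integrable (fun ω => f ω * g ω) μ := by
  have e : (fun ω => f ω * g ω)
      = fun ω => ((1:ℝ)/2) * ((f ω + g ω) ^ 2 - f ω ^ 2 - g ω ^ 2) := by
    funext ω; ring
  rw [e]
  have h1 : Integrable (fun ω => (f ω + g ω) ^ 2) μ := (hf.add hg).integrable_sq
  exact ((h1.sub hf.integrable_sq).sub hg.integrable_sq).const_mul _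

/-- Closed second-moment recursion for one-dimensional linearized heavy-ball SGD:
if `x t = (1 + β - η h_t) x (t-1) - β x (t-2)` with `(h_t)_{t≥2}` i.i.d., square
integrable, of mean `a` and variance `σ_b²`, each `h_t` independent of
`(x (t-1), x (t-2))`, then the vector of second moments
`w t = (E[x_t²], E[x_t x_{t-1}], E[x_{t-1}²])` satisfies `w t = R(η) w (t-1)` with
`R(η) = !![α₂, -2βα₁, β²; α₁, -β, 0; 1, 0, 0]`, `α₁ = 1+β-ηa`, `α₂ = α₁² + η²σ_b²`. -/
theorem heavy_ball_second_moment_recursion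
    {Ω : Type*} [MeasurableSpace Ω] (μ : Measure Ω) [IsProbabilityMeasure μ]
    (β η a σb2 : ℝ) (h x : ℕ → Ω → ℝ)
    (hmeas_h : ∀ t, Measurable (h t))
    (hmeas_x : ∀ t, Measurable (x t))
    (hL2_h : ∀ t, 2 ≤ t → MemLp (h t) 2 μ)
    (hL2_x : ∀ t, MemLp (x t) 2 μ)
    (hindep_iid : iIndepFun (fun t => h (t + 2)) μ)
    (hident : ∀ s t, 2 ≤ s → 2 ≤ t → IdentDistrib (h s) (h t) μ μ)
    (hmean : ∀ t, 2 ≤ t → ∫ ω, h t ω ∂μ = a)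
    (hvar : ∀ t, 2 ≤ t → variance (h t) μ = σb2)
    (hrec : ∀ t, 2 ≤ t → ∀ ω,
      x t ω = (1 + β - η * h t ω) * x (t - 1) ω - β * x (t - 2) ω)
    (hindep : ∀ t, 2 ≤ t →
      IndepFun (h t) (fun ω => (x (t - 1) ω, x (t - 2) ω)) μ)
    (w : ℕ → Fin 3 → ℝ)
    (hw : ∀ t, w t = ![∫ ω, (x t ω) ^ 2 ∂μ,
                       ∫ ω, x t ω * x (t - 1) ω ∂μ,
                       ∫ ω, (x (t - 1) ω) ^ 2 ∂μ])
    (R : Matrix (Fin 3) (Fin 3) ℝ)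
    (hR : R = !![(1 + β - η * a) ^ 2 + η ^ 2 * σb2, -2 * β * (1 + β - η * a), β ^ 2;
                 1 + β - η * a, -β, 0;
                 1, 0, 0]) :
    ∀ t, 2 ≤ t → w t = R.mulVec (w (t - 1)) := by
  intro t ht
  have h12 : t - 1 - 1 = t - 2 := by omega
  have mh : MemLp (h t) 2 μ := hL2_h t ht
  have mx1 : MemLp (x (t - 1)) 2 μ := hL2_x (t - 1)
  have mx2 : MemLp (x (t - 2)) 2 μ := hL2_x (t - 2)
  have ih : Integrable (h t) μ := mh.integrable one_le_two
  have ih2 : Integrable (fun ω => (h t ω) ^ 2) μ := mh.integrable_sq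
  -- mean of h squared
  have hsq : ∫ ω, (h t ω) ^ 2 ∂μ = σb2 + a ^ 2 := by
    have hv := variance_eq_sub mh
    rw [hvar t ht, hmean t ht] at hv
    have : μ[(h t) ^ 2] = ∫ ω, (h t ω) ^ 2 ∂μ := by
      apply integral_congr_ae; filter_upwards with ω; simp
    rw [this] at hv
    linarith
  -- the affine factor
  have iφ1 : Integrable (fun ω => 1 + β - η * h t ω) μ :=
    (integrable_const (1 + β)).sub (ih.const_mul η)
  have iφ2 : Integrable (fun ω => (1 + β - η * h t ω) ^ 2) μ := by
    have e : (fun ω => (1 + β - η * h t ω) ^ 2)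
        = fun ω => ((1 + β) ^ 2 - (2 * (1 + β) * η) * h t ω + η ^ 2 * (h t ω) ^ 2) := by
      funext ω; ring
    rw [e]
    exact ((integrable_const _).sub (ih.const_mul _)).add (ih2.const_mul _)
  have Eφ1 : ∫ ω, (1 + β - η * h t ω) ∂μ = 1 + β - η * a := by
    rw [integral_sub (integrable_const _) (ih.const_mul η), integral_const_mul,
      hmean t ht]
    simp
  have Eφ2 : ∫ ω, (1 + β - η * h t ω) ^ 2 ∂μ = (1 + β - η * a) ^ 2 + η ^ 2 * σb2 := by
    have e : (fun ω => (1 + β - η * h t ω) ^ 2)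
        = fun ω => ((1 + β) ^ 2 - (2 * (1 + β) * η) * h t ω + η ^ 2 * (h t ω) ^ 2) := by
      funext ω; ring
    have j1 : Integrable (fun ω => (1 + β) ^ 2 - 2 * (1 + β) * η * h t ω) μ :=
      (integrable_const _).sub (ih.const_mul _)
    have j2 : Integrable (fun ω => η ^ 2 * (h t ω) ^ 2) μ := ih2.const_mul _
    rw [e, integral_add j1 j2,
      integral_sub (integrable_const _) (ih.const_mul _), integral_const_mul,
      integral_const_mul, hmean t ht, hsq]
    simp only [integral_const, measure_univ, probReal_univ, ENNReal.toReal_one, smul_eq_mul, one_mul]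
    ring
  -- integrability of second moments
  have iA : Integrable (fun ω => (x (t - 1) ω) ^ 2) μ := mx1.integrable_sq
  have iB : Integrable (fun ω => x (t - 1) ω * x (t - 2) ω) μ :=
    integrable_mul_of_memL2 mx1 mx2
  have iC : Integrable (fun ω => (x (t - 2) ω) ^ 2) μ := mx2.integrable_sq
  -- measurability of the test functions
  have hφ1m : Measurable (fun y : ℝ => 1 + β - η * y) := by fun_prop
  have hφ2m : Measurable (fun y : ℝ => (1 + β - η * y) ^ 2) := by fun_prop
  have hψam : Measurable (fun p : ℝ × ℝ => p.1 ^ 2) := by fun_prop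
  have hψbm : Measurable (fun p : ℝ × ℝ => p.1 * p.2) := by fun_prop
  -- key product identities via independence
  have key : ∀ (F : ℝ → ℝ) (G : ℝ × ℝ → ℝ), Measurable F → Measurable G →
      Integrable (fun ω => F (h t ω)) μ →
      Integrable (fun ω => G (x (t - 1) ω, x (t - 2) ω)) μ →
      (∫ ω, F (h t ω) * G (x (t - 1) ω, x (t - 2) ω) ∂μ
        = (∫ ω, F (h t ω) ∂μ) * ∫ ω, G (x (t - 1) ω, x (t - 2) ω) ∂μ)
      ∧ Integrable (fun ω => F (h t ω) * G (x (t - 1) ω, x (t - 2) ω)) μ := by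
    intro F G hF hG hiF hiG
    have hI : IndepFun (fun ω => F (h t ω))
        (fun ω => G (x (t - 1) ω, x (t - 2) ω)) μ := (hindep t ht).comp hF hG
    exact ⟨hI.integral_fun_mul_eq_mul_integral hiF.aestronglyMeasurable hiG.aestronglyMeasurable, hI.integrable_mul hiF hiG⟩
  obtain ⟨P1, I1⟩ := key (fun y => (1 + β - η * y) ^ 2) (fun p => p.1 ^ 2) hφ2m hψam iφ2 iA
  obtain ⟨P2, I2⟩ := key (fun y => 1 + β - η * y) (fun p => p.1 * p.2) hφ1m hψbm iφ1 iB
  obtain ⟨P3, I3⟩ := key (fun y => 1 + β - η * y) (fun p => p.1 ^ 2) hφ1m hψam iφ1 iA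
  dsimp only at P1 I1 P2 I2 P3 I3
  -- second moment of x t
  have Ex2 : ∫ ω, (x t ω) ^ 2 ∂μ
      = ((1 + β - η * a) ^ 2 + η ^ 2 * σb2) * (∫ ω, (x (t - 1) ω) ^ 2 ∂μ)
        + (-2 * β * (1 + β - η * a)) * (∫ ω, x (t - 1) ω * x (t - 2) ω ∂μ)
        + β ^ 2 * (∫ ω, (x (t - 2) ω) ^ 2 ∂μ) := by
    have e : (fun ω => (x t ω) ^ 2)
        = fun ω => (1 + β - η * h t ω) ^ 2 * (x (t - 1) ω) ^ 2
            + (-2 * β) * ((1 + β - η * h t ω) * (x (t - 1) ω * x (t - 2) ω))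
            + β ^ 2 * (x (t - 2) ω) ^ 2 := by
      funext ω; rw [hrec t ht ω]; ring
    have k2 : Integrable (fun ω =>
        -2 * β * ((1 + β - η * h t ω) * (x (t - 1) ω * x (t - 2) ω))) μ := I2.const_mul _
    have k3 : Integrable (fun ω => β ^ 2 * (x (t - 2) ω) ^ 2) μ := iC.const_mul _
    have k12 : Integrable (fun ω => (1 + β - η * h t ω) ^ 2 * (x (t - 1) ω) ^ 2
        + -2 * β * ((1 + β - η * h t ω) * (x (t - 1) ω * x (t - 2) ω))) μ := I1.add k2
    rw [e, integral_add k12 k3, integral_add I1 k2, integral_const_mul, integral_const_mul,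
      P1, P2, Eφ1, Eφ2]
    ring
  -- cross moment
  have Exx : ∫ ω, x t ω * x (t - 1) ω ∂μ
      = (1 + β - η * a) * (∫ ω, (x (t - 1) ω) ^ 2 ∂μ)
        + (-β) * (∫ ω, x (t - 1) ω * x (t - 2) ω ∂μ) := by
    have e : (fun ω => x t ω * x (t - 1) ω)
        = fun ω => (1 + β - η * h t ω) * (x (t - 1) ω) ^ 2
            + (-β) * (x (t - 1) ω * x (t - 2) ω) := by
      funext ω; rw [hrec t ht ω]; ring
    have k4 : Integrable (fun ω => -β * (x (t - 1) ω * x (t - 2) ω)) μ := iB.const_mul _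
    rw [e, integral_add I3 k4, integral_const_mul, P3, Eφ1]
  rw [hw t, hw (t - 1), hR, h12]
  funext i
  fin_cases i <;>
    simp [Matrix.mulVec, dotProduct, Fin.sum_univ_three, Ex2, Exx] <;> ring
end

section
/- Let β ∈ [0,1), a ∈ ℝ, σ_b² ≥ 0, and let p_η(λ) = λ³ + (β − α₂(η))·λ² + (2β·α₁(η)² − β·α₂(η) − β²)·λ − β³ with α₁(η) := 1+β−ηa and α₂(η) := α₁(η)² + η²σ_b². Then there exist ε > 0 and a continuously differentiable function λ⋆ : (−ε, ε) → ℝ with λ⋆(0) = 1, p_η(λ⋆(η)) = 0 for all |η| < ε, and the second-order expansion λ⋆(η) = 1 − (2a/(1−β))·η + (σ_b²/(1−β)² + ((1−3β)/(1−β)³)·a²)·η² + O(η³) as η → 0. -/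
open Asymptotics

set_option maxHeartbeats 4000000

/-- For momentum `β ∈ [0,1)`, mean curvature `a` and variance `σ_b² ≥ 0`, the
heavy-ball second-moment characteristic polynomial
`p_η(λ) = λ³ + (β - α₂(η))λ² + (2βα₁(η)² - βα₂(η) - β²)λ - β³`, with
`α₁(η) = 1+β-ηa` and `α₂(η) = α₁(η)² + η²σ_b²`, admits near `η = 0` a C¹ branch
of roots `λ⋆` with `λ⋆(0) = 1` and the second-order expansion
`λ⋆(η) = 1 - (2a/(1-β))η + (σ_b²/(1-β)² + ((1-3β)/(1-β)³)a²)η² + O(η³)`. -/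
theorem heavy_ball_dominant_eigenvalue_expansion
    (β a σb2 : ℝ) (hβ0 : 0 ≤ β) (hβ1 : β < 1) (hσ : 0 ≤ σb2)
    (p : ℝ → ℝ → ℝ)
    (hp : ∀ η lam : ℝ,
      p η lam = lam ^ 3 + (β - ((1 + β - η * a) ^ 2 + η ^ 2 * σb2)) * lam ^ 2
          + (2 * β * (1 + β - η * a) ^ 2 - β * ((1 + β - η * a) ^ 2 + η ^ 2 * σb2) - β ^ 2)
            * lam - β ^ 3) :
    ∃ ε > (0 : ℝ), ∃ lamStar : ℝ → ℝ,
      ContDiffOn ℝ 1 lamStar (Set.Ioo (-ε) ε) ∧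
      lamStar 0 = 1 ∧
      (∀ η : ℝ, |η| < ε → p η (lamStar η) = 0) ∧
      (fun η : ℝ =>
          lamStar η
            - (1 - (2 * a / (1 - β)) * η
                + (σb2 / (1 - β) ^ 2 + ((1 - 3 * β) / (1 - β) ^ 3) * a ^ 2) * η ^ 2))
        =O[nhds (0 : ℝ)] fun η : ℝ => η ^ 3 := by
  have hD1 : (1:ℝ) - β ≠ 0 := by linarith
  -- the polynomial as a function on the plane, and the associated plane map
  set P : ℝ × ℝ → ℝ := fun x =>
    x.2 ^ 3 + (β - ((1 + β - x.1 * a) ^ 2 + x.1 ^ 2 * σb2)) * x.2 ^ 2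
      + (2 * β * (1 + β - x.1 * a) ^ 2 - β * ((1 + β - x.1 * a) ^ 2 + x.1 ^ 2 * σb2) - β ^ 2)
        * x.2 - β ^ 3 with hPdef
  set F : ℝ × ℝ → ℝ × ℝ := fun x => (x.1, P x) with hFdef
  have hPc : ContDiff ℝ 1 P := by rw [hPdef]; fun_prop
  have hPd : HasFDerivAt P (fderiv ℝ P ((0:ℝ), (1:ℝ))) ((0:ℝ), (1:ℝ)) :=
    ((hPc.differentiable one_ne_zero).differentiableAt).hasFDerivAt
  set L : ℝ × ℝ →L[ℝ] ℝ := fderiv ℝ P ((0:ℝ), (1:ℝ)) with hLdef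
  have hlin : ∀ h k : ℝ, L (h, k) = h * L (1, 0) + k * L (0, 1) := by
    intro h k
    have hx : ((h, k) : ℝ × ℝ) = h • ((1:ℝ), (0:ℝ)) + k • ((0:ℝ), (1:ℝ)) := by
      simp [Prod.ext_iff]
    rw [hx, map_add, map_smul, map_smul, smul_eq_mul, smul_eq_mul]
  -- the partial derivative in the second variable at (0,1)
  have hgen : HasDerivAt (fun lam : ℝ => P (0, lam)) (L (0, 1)) 1 := by
    have hc : HasDerivAt (fun lam : ℝ => (((0:ℝ), lam) : ℝ × ℝ)) ((0:ℝ), (1:ℝ)) 1 :=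
      (hasDerivAt_const _ _).prodMk (hasDerivAt_id _)
    exact hPd.comp_hasDerivAt _ hc
  have hexp : HasDerivAt (fun lam : ℝ => P (0, lam))
      (3 * 1 ^ 2 + (β - ((1 + β - 0 * a) ^ 2 + 0 ^ 2 * σb2)) * (2 * 1)
        + (2 * β * (1 + β - 0 * a) ^ 2 - β * ((1 + β - 0 * a) ^ 2 + 0 ^ 2 * σb2) - β ^ 2) * 1)
      1 := by
    have hA : HasDerivAt (fun lam : ℝ => lam ^ 3) (3 * 1 ^ 2) 1 := by
      simpa using hasDerivAt_pow 3 (1:ℝ)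
    have hB : HasDerivAt (fun lam : ℝ => lam ^ 2) (2 * 1) 1 := by
      simpa using hasDerivAt_pow 2 (1:ℝ)
    have hid : HasDerivAt (fun lam : ℝ => lam) 1 1 := hasDerivAt_id 1
    have h' := ((hA.add (hB.const_mul (β - ((1 + β - 0 * a) ^ 2 + 0 ^ 2 * σb2)))).add
        (hid.const_mul
          (2 * β * (1 + β - 0 * a) ^ 2 - β * ((1 + β - 0 * a) ^ 2 + 0 ^ 2 * σb2) - β ^ 2))).sub_const
        (β ^ 3)
    have hval : (β - ((1 + β - 0 * a) ^ 2 + 0 ^ 2 * σb2)) * (2 * 1)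
        = 3 * 1 ^ 2 + (β - ((1 + β - 0 * a) ^ 2 + 0 ^ 2 * σb2)) * (2 * 1) - 3 * 1 ^ 2 := by ring
    simp only [hPdef]
    convert h' using 2
    · rfl
    · rfl
    · simp only [Pi.add_apply]
  have hDval : L (0, 1)
      = 3 * 1 ^ 2 + (β - ((1 + β - 0 * a) ^ 2 + 0 ^ 2 * σb2)) * (2 * 1)
        + (2 * β * (1 + β - 0 * a) ^ 2 - β * ((1 + β - 0 * a) ^ 2 + 0 ^ 2 * σb2) - β ^ 2) * 1 :=
    hgen.unique hexp
  have hDne : L (0, 1) ≠ 0 := by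
    have h0 : L (0, 1) = (1 - β) ^ 2 * (1 + β) := by rw [hDval]; ring
    rw [h0]
    exact ne_of_gt (mul_pos (pow_pos (by linarith) 2) (by linarith))
  -- the derivative of F at (0,1) as a continuous linear equivalence
  set Lfwd : ℝ × ℝ →L[ℝ] ℝ × ℝ := (ContinuousLinearMap.fst ℝ ℝ ℝ).prod L with hLfwd
  set Linv : ℝ × ℝ →L[ℝ] ℝ × ℝ :=
    (ContinuousLinearMap.fst ℝ ℝ ℝ).prod
      ((L (0, 1))⁻¹ • (ContinuousLinearMap.snd ℝ ℝ ℝ - L (1, 0) • ContinuousLinearMap.fst ℝ ℝ ℝ))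
    with hLinv
  have hli : Function.LeftInverse Linv Lfwd := by
    rintro ⟨h, k⟩
    have hx := hlin h k
    simp only [hLfwd, hLinv, ContinuousLinearMap.prod_apply, ContinuousLinearMap.coe_fst',
      ContinuousLinearMap.smul_apply, ContinuousLinearMap.sub_apply, ContinuousLinearMap.coe_snd',
      Prod.mk.injEq, smul_eq_mul]
    refine ⟨trivial, ?_⟩
    rw [hx]
    field_simp
    ring
  have hri : Function.RightInverse Linv Lfwd := by
    rintro ⟨h, k⟩
    have hx := hlin h ((L (0, 1))⁻¹ * (k - L (1, 0) * h))
    simp only [hLfwd, hLinv, ContinuousLinearMap.prod_apply, ContinuousLinearMap.coe_fst',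
      ContinuousLinearMap.smul_apply, ContinuousLinearMap.sub_apply, ContinuousLinearMap.coe_snd',
      Prod.mk.injEq, smul_eq_mul]
    refine ⟨trivial, ?_⟩
    rw [hx]
    field_simp
    ring
  set f'e : (ℝ × ℝ) ≃L[ℝ] ℝ × ℝ := ContinuousLinearEquiv.equivOfInverse Lfwd Linv hli hri
    with hf'e
  have hFd : HasFDerivAt F (f'e : ℝ × ℝ →L[ℝ] ℝ × ℝ) ((0:ℝ), (1:ℝ)) := by
    have h1 : HasFDerivAt F Lfwd ((0:ℝ), (1:ℝ)) := by
      rw [hFdef, hLfwd]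
      exact hasFDerivAt_fst.prodMk hPd
    exact h1
  have hFc : ContDiffAt ℝ 1 F ((0:ℝ), (1:ℝ)) := by
    rw [hFdef]
    exact (contDiff_fst.prodMk hPc).contDiffAt
  have hF01 : F ((0:ℝ), (1:ℝ)) = ((0:ℝ), (0:ℝ)) := by
    simp only [hFdef, hPdef, Prod.mk.injEq]
    exact ⟨trivial, by ring⟩
  have hS := hFc.hasStrictFDerivAt' hFd one_ne_zero
  set φ : ℝ × ℝ → ℝ × ℝ := hS.localInverse F f'e ((0:ℝ), (1:ℝ)) with hφdef
  set lam : ℝ → ℝ := fun η => (φ (η, 0)).2 with hlam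
  have hφc : ContDiffAt ℝ 1 φ ((0:ℝ), (0:ℝ)) := by
    have h1 := hFc.to_localInverse hFd one_ne_zero
    rw [hF01] at h1
    exact h1
  have hev_right : ∀ᶠ y in nhds ((0:ℝ), (0:ℝ)), F (φ y) = y := by
    have h1 := hS.eventually_right_inverse
    rwa [hF01] at h1
  have hφ01 : φ ((0:ℝ), (0:ℝ)) = ((0:ℝ), (1:ℝ)) := by
    have h1 := hS.localInverse_apply_image
    rwa [hF01] at h1
  have hmap : Filter.Tendsto (fun η : ℝ => ((η, (0:ℝ)) : ℝ × ℝ)) (nhds 0)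
      (nhds ((0:ℝ), (0:ℝ))) := by
    have hcont : Continuous (fun η : ℝ => ((η, (0:ℝ)) : ℝ × ℝ)) :=
      continuous_id.prodMk continuous_const
    exact hcont.tendsto 0
  have hroot' : ∀ᶠ η in nhds (0:ℝ), F (φ (η, 0)) = (η, 0) := hmap.eventually hev_right
  have hpev : ∀ᶠ η in nhds (0:ℝ), p η (lam η) = 0 := by
    filter_upwards [hroot'] with η hη
    simp only [hlam]
    rw [hp]
    simp only [hFdef, Prod.mk.injEq] at hη
    obtain ⟨h1, h2⟩ := hη
    simp only [hPdef] at h2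
    generalize hz : φ (η, 0) = z at h1 h2 ⊢
    rw [← h1]
    exact h2
  have hl0 : lam 0 = 1 := by rw [hlam]; simp only []; rw [hφ01]
  have hlsc : ContDiffAt ℝ 1 lam 0 := by
    have h1 : ContDiffAt ℝ 1 (fun η : ℝ => ((η, (0:ℝ)) : ℝ × ℝ)) 0 :=
      (contDiff_id.prodMk contDiff_const).contDiffAt
    have h2 : ContDiffAt ℝ 1 (Prod.snd : ℝ × ℝ → ℝ) (φ ((0:ℝ), (0:ℝ))) :=
      contDiff_snd.contDiffAt
    exact ContDiffAt.comp (f := fun η : ℝ => ((η, (0:ℝ)) : ℝ × ℝ)) 0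
      (ContDiffAt.comp ((0:ℝ), (0:ℝ)) h2 hφc) h1
  have hlamc : ContinuousAt lam 0 := hlsc.continuousAt
  -- the quadratic approximation and the error polynomial
  set Q : ℝ → ℝ := fun η => 1 - (2 * a / (1 - β)) * η
      + (σb2 / (1 - β) ^ 2 + ((1 - 3 * β) / (1 - β) ^ 3) * a ^ 2) * η ^ 2 with hQdef
  set T : ℝ → ℝ := fun η => (2*β*σb2^2*η + 2*β*σb2^3*η^3 - 4*β*a*σb2 - 8*β*a*σb2^2*η^2 + 10*β*a^2*σb2*η + 4*β*a^2*σb2^2*η^3 - 8*β*a^3*σb2*η^2 + 2*β*a^4*σb2*η^3 - 11*β^2*σb2^2*η - 7*β^2*σb2^3*η^3 + 24*β^2*a*σb2 + 34*β^2*a*σb2^2*η^2 - 58*β^2*a^2*σb2*η - 25*β^2*a^2*σb2^2*η^3 + 4*β^2*a^3 + 60*β^2*a^3*σb2*η^2 - 11*β^2*a^4*η - 21*β^2*a^4*σb2*η^3 + 10*β^2*a^5*η^2 - 3*β^2*a^6*η^3 + 24*β^3*σb2^2*η + 9*β^3*σb2^3*η^3 - 56*β^3*a*σb2 - 56*β^3*a*σb2^2*η^2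 + 138*β^3*a^2*σb2*η + 45*β^3*a^2*σb2^2*η^3 - 20*β^3*a^3 - 136*β^3*a^3*σb2*η^2 + 46*β^3*a^4*η + 63*β^3*a^4*σb2*η^3 - 48*β^3*a^5*η^2 + 19*β^3*a^6*η^3 - 25*β^4*σb2^2*η - 5*β^4*σb2^3*η^3 + 56*β^4*a*σb2 + 44*β^4*a*σb2^2*η^2 - 170*β^4*a^2*σb2*η - 31*β^4*a^2*σb2^2*η^3 + 36*β^4*a^3 + 128*β^4*a^3*σb2*η^2 - 77*β^4*a^4*η - 59*β^4*a^4*σb2*η^3 + 60*β^4*a^5*η^2 - 33*β^4*a^6*η^3 + 10*β^5*σb2^2*η + β^5*σb2^3*η^3 - 16*β^5*a*σb2^2*η^2 + 110*β^5*a^2*σb2*η + 7*β^5*a^2*σb2^2*η^3 - 20*β^5*a^3 - 48*β^5*a^3*σb2*η^2 + 68*β^5*a^4*η + 15*β^5*a^4*σb2*η^3 - 16*β^5*a^5*η^2 + 9*β^5*a^6*η^3 + 3*β^6*σb2^2*η - 56*β^6*a*σb2 + 2*β^6*a*σb2^2*η^2 - 30*β^6*a^2*σb2*η - 20*β^6*a^3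 + 4*β^6*a^3*σb2*η^2 - 37*β^6*a^4*η - 6*β^6*a^5*η^2 - 4*β^7*σb2^2*η + 56*β^7*a*σb2 - 2*β^7*a^2*σb2*η + 36*β^7*a^3 + 14*β^7*a^4*η + β^8*σb2^2*η - 24*β^8*a*σb2 + 2*β^8*a^2*σb2*η - 20*β^8*a^3 - 3*β^8*a^4*η + 4*β^9*a*σb2 + 4*β^9*a^3) / (1 - β) ^ 9 with hTdef
  have hkey : ∀ η : ℝ, p η (Q η) = η ^ 3 * T η := by
    intro η
    rw [hp]
    simp only [hQdef, hTdef]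
    field_simp
    ring
  have hQc : Continuous Q := by rw [hQdef]; fun_prop
  have hTc : Continuous T := by rw [hTdef]; fun_prop
  have hQ0 : Q 0 = 1 := by simp [hQdef]
  set G : ℝ → ℝ := fun η => (lam η) ^ 2 + (lam η) * (Q η) + (Q η) ^ 2
      + (β - ((1 + β - η * a) ^ 2 + η ^ 2 * σb2)) * ((lam η) + (Q η))
      + (2 * β * (1 + β - η * a) ^ 2 - β * ((1 + β - η * a) ^ 2 + η ^ 2 * σb2) - β ^ 2)
    with hGdef
  have hGc : ContinuousAt G 0 := by
    rw [hGdef]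
    fun_prop
  have hG0 : G 0 ≠ 0 := by
    have h0 : G 0 = (1 - β) ^ 2 * (1 + β) := by
      simp only [hGdef, hl0, hQ0]
      ring
    rw [h0]
    exact ne_of_gt (mul_pos (pow_pos (by linarith) 2) (by linarith))
  have hGne : ∀ᶠ η in nhds (0:ℝ), G η ≠ 0 := hGc.eventually_ne hG0
  have heq : (fun η : ℝ => lam η - Q η) =ᶠ[nhds (0:ℝ)]
      fun η : ℝ => -(p η (Q η)) * (G η)⁻¹ := by
    filter_upwards [hpev, hGne] with η h0 hne
    have hf : p η (lam η) - p η (Q η) = (lam η - Q η) * G η := by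
      simp only [hGdef]
      rw [hp, hp]
      ring
    rw [h0, zero_sub] at hf
    exact (eq_mul_inv_iff_mul_eq₀ hne).mpr hf.symm
  have hbig : (fun η : ℝ => -(p η (Q η)) * (G η)⁻¹) =O[nhds (0:ℝ)] fun η => η ^ 3 := by
    have h1 : (fun η : ℝ => -(p η (Q η)) * (G η)⁻¹)
        = fun η => η ^ 3 * (-(T η) * (G η)⁻¹) := by
      funext η; rw [hkey η]; ring
    rw [h1]
    have h2 : Filter.Tendsto (fun η : ℝ => -(T η) * (G η)⁻¹) (nhds 0)
        (nhds (-(T 0) * (G 0)⁻¹)) :=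
      (hTc.continuousAt.neg).mul (hGc.inv₀ hG0)
    have h3 := (isBigO_refl (fun η : ℝ => η ^ 3) (nhds (0:ℝ))).mul (h2.isBigO_one ℝ)
    simpa using h3
  have hO : (fun η : ℝ => lam η - Q η) =O[nhds (0:ℝ)] fun η => η ^ 3 :=
    hbig.congr' heq.symm Filter.EventuallyEq.rfl
  -- choose the radius
  obtain ⟨u, hu, hcdo⟩ := hlsc.contDiffOn le_rfl (by simp)
  obtain ⟨ε, hε, hball⟩ := Metric.mem_nhds_iff.mp (Filter.inter_mem hu hpev)
  refine ⟨ε, hε, lam, ?_, hl0, ?_, ?_⟩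
  · refine hcdo.mono ?_
    intro x hx
    have hxb : x ∈ Metric.ball (0:ℝ) ε := by
      rw [Real.ball_eq_Ioo]
      simpa using hx
    exact (hball hxb).1
  · intro η hη
    have hxb : η ∈ Metric.ball (0:ℝ) ε := by
      rwa [Metric.mem_ball, Real.dist_eq, sub_zero]
    exact (hball hxb).2
  · simpa only [hQdef] using hO
end

section
/- Let a > 0 and σ_b² ≥ 0, and for β ∈ [0,1) define η_max(β) := 2a(1+β)(1−β) / ((1−β)a² + (1+β)σ_b²). Then: (i) if σ_b² = 0, the function β ↦ η_max(β) = 2(1+β)/a is strictly increasing on [0,1); (ii) if σ_b² > a², the function β ↦ η_max(β) is strictly decreasing on [0,1). Hence the monotonicity of the maximal stable step size in the momentum parameter reverses between the deterministic and noise-dominated regimes. -/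
/-!
The reciprocal of `η_max(β)` splits as `a / (2(1+β)) + σ_b² / (2a(1-β))`: the first
(deterministic) term decreases in `β`, the second (noise) term increases. With `σ_b² = 0`
only the decreasing term survives, so `η_max` increases; once `σ_b² > a²` the noise term
dominates, `1 / η_max` increases, and `η_max` decreases.
-/

open Set

noncomputable def invMaxStepSize (a σb2 β : ℝ) : ℝ :=
  a / (2 * (1 + β)) + σb2 / (2 * a * (1 - β))

theorem inv_invMaxStepSize {a σb2 β : ℝ} (ha : a ≠ 0) (h₁ : 1 + β ≠ 0) (h₂ : 1 - β ≠ 0) :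
    (invMaxStepSize a σb2 β)⁻¹ =
      2 * a * (1 + β) * (1 - β) / ((1 - β) * a ^ 2 + (1 + β) * σb2) := by
  rw [← inv_div, inv_inj, invMaxStepSize]
  field_simp

theorem invMaxStepSize_pos {a σb2 β : ℝ} (ha : 0 < a) (hσ : 0 ≤ σb2) (hβ : β ∈ Ioo (-1) 1) :
    0 < invMaxStepSize a σb2 β := by
  obtain ⟨h₁, h₂⟩ := hβ
  have : 0 < 1 + β := by linarith
  have : 0 < 1 - β := by linarith
  unfold invMaxStepSize
  positivity

theorem strictAntiOn_invMaxStepSize_zero {a : ℝ} (ha : 0 < a) :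
    StrictAntiOn (invMaxStepSize a 0) (Ioi (-1)) := by
  intro x hx y hy hxy
  have hx : 0 < 1 + x := by rw [mem_Ioi] at hx; linarith
  simp only [invMaxStepSize, zero_div, add_zero]
  gcongr

theorem invMaxStepSize_sub_invMaxStepSize {a σb2 x y : ℝ} (ha : a ≠ 0)
    (hx : x ∈ Ioo (-1) 1) (hy : y ∈ Ioo (-1) 1) :
    invMaxStepSize a σb2 y - invMaxStepSize a σb2 x =
      (y - x) * (σb2 * ((1 + x) * (1 + y)) - a ^ 2 * ((1 - x) * (1 - y))) /
        (2 * a * ((1 + x) * (1 + y)) * ((1 - x) * (1 - y))) := by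
  obtain ⟨hx₁, hx₂⟩ := hx
  obtain ⟨hy₁, hy₂⟩ := hy
  have : 1 + x ≠ 0 := by linarith
  have : 1 + y ≠ 0 := by linarith
  have : 1 - x ≠ 0 := by linarith
  have : 1 - y ≠ 0 := by linarith
  unfold invMaxStepSize
  field_simp
  ring

theorem strictMonoOn_invMaxStepSize {a σb2 : ℝ} (ha : 0 < a) (hσ : a ^ 2 < σb2) :
    StrictMonoOn (invMaxStepSize a σb2) (Ico 0 1) := by
  intro x hx y hy hxy
  obtain ⟨hx₀, hx₁⟩ := hx
  obtain ⟨hy₀, hy₁⟩ := hy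
  have hplus : 0 < (1 + x) * (1 + y) := by positivity
  have hminus : 0 < (1 - x) * (1 - y) := mul_pos (by linarith) (by linarith)
  have hnoise : a ^ 2 * ((1 - x) * (1 - y)) < σb2 * ((1 + x) * (1 + y)) :=
    calc a ^ 2 * ((1 - x) * (1 - y))
        ≤ a ^ 2 * ((1 + x) * (1 + y)) := by gcongr <;> nlinarith
      _ < σb2 * ((1 + x) * (1 + y)) := by gcongr
  rw [← sub_pos, invMaxStepSize_sub_invMaxStepSize ha.ne' ⟨by linarith, hx₁⟩ ⟨by linarith, hy₁⟩]
  have : 0 < y - x := sub_pos.2 hxy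
  have : 0 < σb2 * ((1 + x) * (1 + y)) - a ^ 2 * ((1 - x) * (1 - y)) := sub_pos.2 hnoise
  positivity

/-- For `a > 0` and `σ_b² ≥ 0`, consider the maximal mean-square-stable step size
`η_max(β) = 2a(1+β)(1-β) / ((1-β)a² + (1+β)σ_b²)` as a function of the momentum
`β ∈ [0,1)`. Then:
(i) if `σ_b² = 0`, the map `β ↦ η_max(β)` is strictly increasing on `[0,1)`;
(ii) if `σ_b² > a²`, the map `β ↦ η_max(β)` is strictly decreasing on `[0,1)`. -/
theorem eta_max_monotonicity_reversal
    (a σb2 : ℝ) (ha : 0 < a) (hσ : 0 ≤ σb2)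
    (ηmax : ℝ → ℝ)
    (hηmax : ∀ β : ℝ,
      ηmax β = 2 * a * (1 + β) * (1 - β) / ((1 - β) * a ^ 2 + (1 + β) * σb2)) :
    (σb2 = 0 → StrictMonoOn ηmax (Set.Ico (0 : ℝ) 1)) ∧
      (a ^ 2 < σb2 → StrictAntiOn ηmax (Set.Ico (0 : ℝ) 1)) := by
  have hβ {β : ℝ} (h : β ∈ Ico (0 : ℝ) 1) : β ∈ Ioo (-1) 1 := ⟨by linarith [h.1], h.2⟩
  have hinv : EqOn ((·⁻¹) ∘ invMaxStepSize a σb2) ηmax (Ico 0 1) := fun β h => by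
    rw [hηmax, Function.comp_apply,
      inv_invMaxStepSize ha.ne' (by linarith [(hβ h).1]) (by linarith [(hβ h).2])]
  have hpos : MapsTo (invMaxStepSize a σb2) (Ico 0 1) {r | 0 < r} := fun β h =>
    invMaxStepSize_pos ha hσ (hβ h)
  refine ⟨fun hσ₀ => ?_, fun hnoisy => ?_⟩
  · subst hσ₀
    have hanti := (strictAntiOn_invMaxStepSize_zero ha).mono fun β h => (hβ h).1
    exact (strictAntiOn_inv_pos.comp hanti hpos).congr hinv
  · exact (strictAntiOn_inv_pos.comp_strictMonoOn
      (strictMonoOn_invMaxStepSize ha hnoisy) hpos).congr hinv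
end

section
/- Let β ∈ ℝ, η ∈ ℝ, and let (h_t)_{t≥1} be i.i.d. square-integrable real random variables with mean a and variance σ_b², and let (x_t)_{t≥0} be square-integrable real random variables satisfying x_{t+1} = (1 − η·h_t)·((1+β)·x_t − β·x_{t−1}) for t ≥ 1, with h_t independent of the pair (x_t, x_{t−1}). Define w_t := (E[x_t²], E[x_t·x_{t−1}], E[x_{t−1}²])ᵀ ∈ ℝ³. Then w_{t+1} = R_NAG(η)·w_t for all t ≥ 1, where R_NAG(η) is the 3×3 matrix with rows ((1+β)²·q, −2β(1+β)·q, β²·q), ((1+β)·p, −β·p, 0), (1, 0, 0), with p := 1 − η·a and q := p² + η²·σ_b². -/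
open MeasureTheory ProbabilityTheory


private lemma memL2_integrable_mul {Ω : Type*} [MeasurableSpace Ω] {μ : MeasureTheory.Measure Ω}
    {f g : Ω → ℝ} (hf : MeasureTheory.MemLp f 2 μ) (hg : MeasureTheory.MemLp g 2 μ) :
    MeasureTheory.Integrable (fun ω => f ω * g ω) μ := by
  have hpqr : (1 : ENNReal) / 1 = 1 / 2 + 1 / 2 := by
    have h2 : (1 : ENNReal) / 2 + 1 / 2 = 1 := by
      rw [ENNReal.div_add_div_same, one_add_one_eq_two,
        ENNReal.div_self (by norm_num) (by norm_num)]
    rw [h2]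
    simp
  have := hg.smul hf (r := 1)
  exact MeasureTheory.memLp_one_iff_integrable.mp this

/-- Closed second-moment recursion for one-dimensional linearized Nesterov SGD:
if `x (t+1) = (1 - η h_t)((1+β) x t - β x (t-1))` with `(h_t)_{t≥1}` i.i.d., square
integrable, of mean `a` and variance `σ_b²`, each `h_t` independent of
`(x t, x (t-1))`, then the vector of second moments
`w t = (E[x_t²], E[x_t x_{t-1}], E[x_{t-1}²])` satisfies `w (t+1) = R_NAG(η) w t`,
where `R_NAG(η) = !![(1+β)²q, -2β(1+β)q, β²q; (1+β)p, -βp, 0; 1, 0, 0]` with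
`p = 1 - ηa` and `q = p² + η²σ_b²`. -/
theorem nesterov_second_moment_recursion
    {Ω : Type*} [MeasurableSpace Ω] (μ : Measure Ω) [IsProbabilityMeasure μ]
    (β η a σb2 : ℝ) (h x : ℕ → Ω → ℝ)
    (hmeas_h : ∀ t, Measurable (h t))
    (hmeas_x : ∀ t, Measurable (x t))
    (hL2_h : ∀ t, 1 ≤ t → MemLp (h t) 2 μ)
    (hL2_x : ∀ t, MemLp (x t) 2 μ)
    (hindep_iid : iIndepFun (fun t => h (t + 1)) μ)
    (hident : ∀ s t, 1 ≤ s → 1 ≤ t → IdentDistrib (h s) (h t) μ μ)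
    (hmean : ∀ t, 1 ≤ t → ∫ ω, h t ω ∂μ = a)
    (hvar : ∀ t, 1 ≤ t → variance (h t) μ = σb2)
    (hrec : ∀ t, 1 ≤ t → ∀ ω,
      x (t + 1) ω = (1 - η * h t ω) * ((1 + β) * x t ω - β * x (t - 1) ω))
    (hindep : ∀ t, 1 ≤ t →
      IndepFun (h t) (fun ω => (x t ω, x (t - 1) ω)) μ)
    (w : ℕ → Fin 3 → ℝ)
    (hw : ∀ t, w t = ![∫ ω, (x t ω) ^ 2 ∂μ,
                       ∫ ω, x t ω * x (t - 1) ω ∂μ,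
                       ∫ ω, (x (t - 1) ω) ^ 2 ∂μ])
    (R : Matrix (Fin 3) (Fin 3) ℝ)
    (hR : R = !![(1 + β) ^ 2 * ((1 - η * a) ^ 2 + η ^ 2 * σb2),
                 -2 * β * (1 + β) * ((1 - η * a) ^ 2 + η ^ 2 * σb2),
                 β ^ 2 * ((1 - η * a) ^ 2 + η ^ 2 * σb2);
                 (1 + β) * (1 - η * a), -β * (1 - η * a), 0;
                 1, 0, 0]) :
    ∀ t, 1 ≤ t → w (t + 1) = R.mulVec (w t) := by
  intro t ht
  -- abbreviations
  set p : ℝ := 1 - η * a with hp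
  set q : ℝ := (1 - η * a) ^ 2 + η ^ 2 * σb2 with hq
  have hht : MemLp (h t) 2 μ := hL2_h t ht
  have hxt : MemLp (x t) 2 μ := hL2_x t
  have hxt1 : MemLp (x (t - 1)) 2 μ := hL2_x (t - 1)
  -- integrabilities
  have ih : Integrable (h t) μ := hht.integrable one_le_two
  have ih2 : Integrable (fun ω => (h t ω) ^ 2) μ := hht.integrable_sq
  have i00 : Integrable (fun ω => x t ω * x t ω) μ := memL2_integrable_mul hxt hxt
  have i01 : Integrable (fun ω => x t ω * x (t - 1) ω) μ := memL2_integrable_mul hxt hxt1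
  have i11 : Integrable (fun ω => x (t - 1) ω * x (t - 1) ω) μ := memL2_integrable_mul hxt1 hxt1
  have i00' : Integrable (fun ω => (x t ω) ^ 2) μ := hxt.integrable_sq
  have i11' : Integrable (fun ω => (x (t - 1) ω) ^ 2) μ := hxt1.integrable_sq
  -- mean of h squared
  have hmean2 : ∫ ω, (h t ω) ^ 2 ∂μ = σb2 + a ^ 2 := by
    have hv := hvar t ht
    rw [variance_eq_sub hht] at hv
    have hm := hmean t ht
    simp only [Pi.pow_apply] at hv
    rw [hm] at hv
    linarith
  -- E[(1 - η h)^2] = q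
  have hG2 : ∫ ω, (1 - η * h t ω) ^ 2 ∂μ = q := by
    have hexp : ∀ ω, (1 - η * h t ω) ^ 2
        = 1 - (2 * η) * h t ω + η ^ 2 * (h t ω) ^ 2 := by intro ω; ring
    calc ∫ ω, (1 - η * h t ω) ^ 2 ∂μ
        = ∫ ω, (1 - (2 * η) * h t ω + η ^ 2 * (h t ω) ^ 2) ∂μ := by
          exact integral_congr_ae (Filter.Eventually.of_forall hexp)
      _ = (1 - (2 * η) * a) + η ^ 2 * (σb2 + a ^ 2) := by
          have iA : Integrable (fun ω => (1 : ℝ) - (2 * η) * h t ω) μ :=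
            (integrable_const 1).sub (ih.const_mul _)
          have iB : Integrable (fun ω => η ^ 2 * (h t ω) ^ 2) μ := ih2.const_mul _
          rw [integral_add iA iB,
            integral_sub (integrable_const 1) (ih.const_mul (2 * η) : Integrable
              (fun ω => (2 * η) * h t ω) μ),
            integral_const_mul, integral_const_mul, hmean2, hmean t ht]
          simp
      _ = q := by rw [hq]; ring
  -- E[1 - η h] = p
  have hG1 : ∫ ω, (1 - η * h t ω) ∂μ = p := by
    rw [integral_sub (integrable_const 1) (ih.const_mul _), integral_const_mul, hmean t ht]
    simp [hp]
  -- pair measurability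
  have hpair : Measurable (fun ω => (x t ω, x (t - 1) ω)) :=
    (hmeas_x t).prodMk (hmeas_x (t - 1))
  have hI := hindep t ht
  -- row 0 key: E[x_{t+1}^2] = q * E[Y^2]
  have hY : MemLp (fun ω => (1 + β) * x t ω - β * x (t - 1) ω) 2 μ :=
    (hxt.const_mul _).sub (hxt1.const_mul _)
  have key0 : ∫ ω, (x (t + 1) ω) ^ 2 ∂μ
      = q * ∫ ω, ((1 + β) * x t ω - β * x (t - 1) ω) ^ 2 ∂μ := by
    have hf : Measurable (fun z : ℝ => (1 - η * z) ^ 2) :=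
      (measurable_const.sub (measurable_id.const_mul η)).pow_const 2
    have hg : Measurable (fun pr : ℝ × ℝ => ((1 + β) * pr.1 - β * pr.2) ^ 2) :=
      ((measurable_fst.const_mul (1 + β)).sub (measurable_snd.const_mul β)).pow_const 2
    have hind2 := hI.comp hf hg
    have := hind2.integral_mul_eq_mul_integral
      (((memLp_const 1).sub (hht.const_mul η)).integrable_sq).aestronglyMeasurable hY.integrable_sq.aestronglyMeasurable
    calc ∫ ω, (x (t + 1) ω) ^ 2 ∂μ
        = ∫ ω, ((fun z : ℝ => (1 - η * z) ^ 2) ∘ h t) ω *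
            ((fun pr : ℝ × ℝ => ((1 + β) * pr.1 - β * pr.2) ^ 2) ∘
              (fun ω => (x t ω, x (t - 1) ω))) ω ∂μ := by
          refine integral_congr_ae (Filter.Eventually.of_forall fun ω => ?_)
          simp only [Function.comp_apply, hrec t ht ω]
          ring
      _ = q * ∫ ω, ((1 + β) * x t ω - β * x (t - 1) ω) ^ 2 ∂μ := by
          rw [show (fun ω => ((fun z : ℝ => (1 - η * z) ^ 2) ∘ h t) ω *
            ((fun pr : ℝ × ℝ => ((1 + β) * pr.1 - β * pr.2) ^ 2) ∘
              (fun ω => (x t ω, x (t - 1) ω))) ω)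
            = ((fun z : ℝ => (1 - η * z) ^ 2) ∘ h t) *
              ((fun pr : ℝ × ℝ => ((1 + β) * pr.1 - β * pr.2) ^ 2) ∘
                (fun ω => (x t ω, x (t - 1) ω))) from rfl, this]
          rw [show (∫ ω, ((fun z : ℝ => (1 - η * z) ^ 2) ∘ h t) ω ∂μ)
            = ∫ ω, (1 - η * h t ω) ^ 2 ∂μ from rfl, hG2]
          rfl
  -- row 1 key: E[x_{t+1} x_t] = p * E[Y x_t]
  have key1 : ∫ ω, x (t + 1) ω * x t ω ∂μ
      = p * ∫ ω, ((1 + β) * x t ω - β * x (t - 1) ω) * x t ω ∂μ := by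
    have hf : Measurable (fun z : ℝ => 1 - η * z) :=
      measurable_const.sub (measurable_id.const_mul η)
    have hg : Measurable (fun pr : ℝ × ℝ => ((1 + β) * pr.1 - β * pr.2) * pr.1) :=
      ((measurable_fst.const_mul (1 + β)).sub (measurable_snd.const_mul β)).mul measurable_fst
    have hind2 := hI.comp hf hg
    have hYx : Integrable (fun ω => ((1 + β) * x t ω - β * x (t - 1) ω) * x t ω) μ :=
      memL2_integrable_mul hY hxt
    have := hind2.integral_mul_eq_mul_integral (((memLp_const 1).sub (hht.const_mul η)).integrable one_le_two).aestronglyMeasurable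
      hYx.aestronglyMeasurable
    calc ∫ ω, x (t + 1) ω * x t ω ∂μ
        = ∫ ω, ((fun z : ℝ => 1 - η * z) ∘ h t) ω *
            ((fun pr : ℝ × ℝ => ((1 + β) * pr.1 - β * pr.2) * pr.1) ∘
              (fun ω => (x t ω, x (t - 1) ω))) ω ∂μ := by
          refine integral_congr_ae (Filter.Eventually.of_forall fun ω => ?_)
          simp only [Function.comp_apply, hrec t ht ω]
          ring
      _ = p * ∫ ω, ((1 + β) * x t ω - β * x (t - 1) ω) * x t ω ∂μ := by
          rw [show (fun ω => ((fun z : ℝ => 1 - η * z) ∘ h t) ω *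
            ((fun pr : ℝ × ℝ => ((1 + β) * pr.1 - β * pr.2) * pr.1) ∘
              (fun ω => (x t ω, x (t - 1) ω))) ω)
            = ((fun z : ℝ => 1 - η * z) ∘ h t) *
              ((fun pr : ℝ × ℝ => ((1 + β) * pr.1 - β * pr.2) * pr.1) ∘
                (fun ω => (x t ω, x (t - 1) ω))) from rfl, this]
          rw [show (∫ ω, ((fun z : ℝ => 1 - η * z) ∘ h t) ω ∂μ)
            = ∫ ω, (1 - η * h t ω) ∂μ from rfl, hG1]
          rfl
  -- expansions
  have expY2 : ∫ ω, ((1 + β) * x t ω - β * x (t - 1) ω) ^ 2 ∂μ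
      = (1 + β) ^ 2 * (∫ ω, (x t ω) ^ 2 ∂μ)
        - 2 * β * (1 + β) * (∫ ω, x t ω * x (t - 1) ω ∂μ)
        + β ^ 2 * ∫ ω, (x (t - 1) ω) ^ 2 ∂μ := by
    have hpt : ∀ ω, ((1 + β) * x t ω - β * x (t - 1) ω) ^ 2
        = (1 + β) ^ 2 * (x t ω) ^ 2 - 2 * β * (1 + β) * (x t ω * x (t - 1) ω)
          + β ^ 2 * (x (t - 1) ω) ^ 2 := by intro ω; ring
    have iA : Integrable (fun ω => (1 + β) ^ 2 * (x t ω) ^ 2) μ := i00'.const_mul _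
    have iB : Integrable (fun ω => 2 * β * (1 + β) * (x t ω * x (t - 1) ω)) μ :=
      i01.const_mul _
    have iC : Integrable (fun ω => β ^ 2 * (x (t - 1) ω) ^ 2) μ := i11'.const_mul _
    have iAB : Integrable (fun ω => (1 + β) ^ 2 * (x t ω) ^ 2
        - 2 * β * (1 + β) * (x t ω * x (t - 1) ω)) μ := iA.sub iB
    rw [integral_congr_ae (Filter.Eventually.of_forall hpt),
      integral_add iAB iC, integral_sub iA iB, integral_const_mul,
      integral_const_mul, integral_const_mul]
  have expYx : ∫ ω, ((1 + β) * x t ω - β * x (t - 1) ω) * x t ω ∂μ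
      = (1 + β) * (∫ ω, (x t ω) ^ 2 ∂μ) - β * ∫ ω, x t ω * x (t - 1) ω ∂μ := by
    have hpt : ∀ ω, ((1 + β) * x t ω - β * x (t - 1) ω) * x t ω
        = (1 + β) * (x t ω) ^ 2 - β * (x t ω * x (t - 1) ω) := by intro ω; ring
    have iA : Integrable (fun ω => (1 + β) * (x t ω) ^ 2) μ := i00'.const_mul _
    have iB : Integrable (fun ω => β * (x t ω * x (t - 1) ω)) μ := i01.const_mul _
    rw [integral_congr_ae (Filter.Eventually.of_forall hpt),
      integral_sub iA iB, integral_const_mul, integral_const_mul]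
  -- finish
  have ht1 : t + 1 - 1 = t := rfl
  funext i
  fin_cases i
  · show w (t + 1) 0 = R.mulVec (w t) 0
    rw [hw (t + 1), hw t, hR]
    simp only [Matrix.mulVec, dotProduct, Fin.sum_univ_three]
    simp only [Matrix.cons_val_zero, Matrix.cons_val_one, Matrix.head_cons,
      Matrix.cons_val', Matrix.empty_val', Matrix.cons_val_fin_one, Matrix.head_fin_const,
      Matrix.cons_val_two, Matrix.tail_cons, Matrix.of_apply]
    rw [key0, expY2]
    ring
  · show w (t + 1) 1 = R.mulVec (w t) 1
    rw [hw (t + 1), hw t, hR]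
    simp only [Matrix.mulVec, dotProduct, Fin.sum_univ_three]
    simp only [Matrix.cons_val_zero, Matrix.cons_val_one, Matrix.head_cons,
      Matrix.cons_val', Matrix.empty_val', Matrix.cons_val_fin_one, Matrix.head_fin_const,
      Matrix.cons_val_two, Matrix.tail_cons, Matrix.of_apply]
    simp only [Nat.add_sub_cancel]
    rw [key1, expYx]
    ring
  · show w (t + 1) 2 = R.mulVec (w t) 2
    rw [hw (t + 1), hw t, hR]
    simp only [Matrix.mulVec, dotProduct, Fin.sum_univ_three]
    simp only [Matrix.cons_val_zero, Matrix.cons_val_one, Matrix.head_cons,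
      Matrix.cons_val', Matrix.empty_val', Matrix.cons_val_fin_one, Matrix.head_fin_const,
      Matrix.cons_val_two, Matrix.tail_cons, Matrix.of_apply]
    simp only [Nat.add_sub_cancel_left, Nat.add_sub_cancel]
    ring
end

section
/- Let β ∈ [0,1), a ∈ ℝ, σ_b² ≥ 0, and let p_η(λ) = λ³ + (β·p(η) − (1+β)²·q(η))·λ² + β·q(η)·((1+β)²·p(η) − β)·λ − β³·p(η)·q(η) with p(η) := 1 − ηa and q(η) := p(η)² + η²σ_b². Then there exist ε > 0 and a continuously differentiable function λ⋆ : (−ε, ε) → ℝ with λ⋆(0) = 1, p_η(λ⋆(η)) = 0 for all |η| < ε, and the second-order expansion λ⋆(η) = 1 − (2a/(1−β))·η + (σ_b²/(1−β)² + ((1−β−2β²)/(1−β)³)·a²)·η² + O(η³) as η → 0. In particular, the expansion agrees with that of heavy-ball SGDM through first order in η and, in the noise-dominated regime, through the σ_b²·η² term. -/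
open Asymptotics

noncomputable section

def nagP (β a σb2 : ℝ) (z : ℝ × ℝ) : ℝ :=
  z.2 ^ 3
    + (β * (1 - z.1 * a) - (1 + β) ^ 2 * ((1 - z.1 * a) ^ 2 + z.1 ^ 2 * σb2)) * z.2 ^ 2
    + β * ((1 - z.1 * a) ^ 2 + z.1 ^ 2 * σb2) * ((1 + β) ^ 2 * (1 - z.1 * a) - β) * z.2
    - β ^ 3 * (1 - z.1 * a) * ((1 - z.1 * a) ^ 2 + z.1 ^ 2 * σb2)

def nagQ (β a σb2 : ℝ) (η : ℝ) : ℝ :=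
  1 - (2 * a / (1 - β)) * η
    + (σb2 / (1 - β) ^ 2 + ((1 - β - 2 * β ^ 2) / (1 - β) ^ 3) * a ^ 2) * η ^ 2

def nagG (β a σb2 : ℝ) (η x y : ℝ) : ℝ :=
  x ^ 2 + x * y + y ^ 2
    + (β * (1 - η * a) - (1 + β) ^ 2 * ((1 - η * a) ^ 2 + η ^ 2 * σb2)) * (x + y)
    + β * ((1 - η * a) ^ 2 + η ^ 2 * σb2) * ((1 + β) ^ 2 * (1 - η * a) - β)

set_option maxHeartbeats 1000000 in
def nagS (β a σb2 : ℝ) (η : ℝ) : ℝ :=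
  (2 : ℝ) * β ^ 2 * σb2 ^ 2 * η
    + (2 : ℝ) * β ^ 2 * σb2 ^ 3 * η ^ 3
    + (-4 : ℝ) * β ^ 2 * a * σb2
    + (-8 : ℝ) * β ^ 2 * a * σb2 ^ 2 * η ^ 2
    + (10 : ℝ) * β ^ 2 * a ^ 2 * σb2 * η
    + (4 : ℝ) * β ^ 2 * a ^ 2 * σb2 ^ 2 * η ^ 3
    + (-8 : ℝ) * β ^ 2 * a ^ 3 * σb2 * η ^ 2
    + (2 : ℝ) * β ^ 2 * a ^ 4 * σb2 * η ^ 3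
    + (-10 : ℝ) * β ^ 3 * σb2 ^ 2 * η
    + (-6 : ℝ) * β ^ 3 * σb2 ^ 3 * η ^ 3
    + (24 : ℝ) * β ^ 3 * a * σb2
    + (32 : ℝ) * β ^ 3 * a * σb2 ^ 2 * η ^ 2
    + (-52 : ℝ) * β ^ 3 * a ^ 2 * σb2 * η
    + (-14 : ℝ) * β ^ 3 * a ^ 2 * σb2 ^ 2 * η ^ 3
    + (2 : ℝ) * β ^ 3 * a ^ 3
    + (38 : ℝ) * β ^ 3 * a ^ 3 * σb2 * η ^ 2
    + (-6 : ℝ) * β ^ 3 * a ^ 4 * η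
    + (-10 : ℝ) * β ^ 3 * a ^ 4 * σb2 * η ^ 3
    + (6 : ℝ) * β ^ 3 * a ^ 5 * η ^ 2
    + (-2 : ℝ) * β ^ 3 * a ^ 6 * η ^ 3
    + (17 : ℝ) * β ^ 4 * σb2 ^ 2 * η
    + (5 : ℝ) * β ^ 4 * σb2 ^ 3 * η ^ 3
    + (-56 : ℝ) * β ^ 4 * a * σb2
    + (-46 : ℝ) * β ^ 4 * a * σb2 ^ 2 * η ^ 2
    + (100 : ℝ) * β ^ 4 * a ^ 2 * σb2 * η
    + (5 : ℝ) * β ^ 4 * a ^ 2 * σb2 ^ 2 * η ^ 3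
    + (-8 : ℝ) * β ^ 4 * a ^ 3
    + (-44 : ℝ) * β ^ 4 * a ^ 3 * σb2 * η ^ 2
    + (19 : ℝ) * β ^ 4 * a ^ 4 * η
    + (3 : ℝ) * β ^ 4 * a ^ 4 * σb2 * η ^ 3
    + (-14 : ℝ) * β ^ 4 * a ^ 5 * η ^ 2
    + (3 : ℝ) * β ^ 4 * a ^ 6 * η ^ 3
    + (-4 : ℝ) * β ^ 5 * σb2 ^ 2 * η
    + (1 : ℝ) * β ^ 5 * σb2 ^ 3 * η ^ 3
    + (56 : ℝ) * β ^ 5 * a * σb2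
    + (23 : ℝ) * β ^ 5 * a * σb2 ^ 2 * η ^ 2
    + (-68 : ℝ) * β ^ 5 * a ^ 2 * σb2 * η
    + (19 : ℝ) * β ^ 5 * a ^ 2 * σb2 ^ 2 * η ^ 3
    + (8 : ℝ) * β ^ 5 * a ^ 3
    + (-18 : ℝ) * β ^ 5 * a ^ 3 * σb2 * η ^ 2
    + (-12 : ℝ) * β ^ 5 * a ^ 4 * η
    + (27 : ℝ) * β ^ 5 * a ^ 4 * σb2 * η ^ 3
    + (-5 : ℝ) * β ^ 5 * a ^ 5 * η ^ 2
    + (9 : ℝ) * β ^ 5 * a ^ 6 * η ^ 3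
    + (-25 : ℝ) * β ^ 6 * σb2 ^ 2 * η
    + (-3 : ℝ) * β ^ 6 * σb2 ^ 3 * η ^ 3
    + (9 : ℝ) * β ^ 6 * a * σb2 ^ 2 * η ^ 2
    + (-40 : ℝ) * β ^ 6 * a ^ 2 * σb2 * η
    + (-13 : ℝ) * β ^ 6 * a ^ 2 * σb2 ^ 2 * η ^ 3
    + (8 : ℝ) * β ^ 6 * a ^ 3
    + (58 : ℝ) * β ^ 6 * a ^ 3 * σb2 * η ^ 2
    + (-23 : ℝ) * β ^ 6 * a ^ 4 * η
    + (-9 : ℝ) * β ^ 6 * a ^ 4 * σb2 * η ^ 3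
    + (21 : ℝ) * β ^ 6 * a ^ 5 * η ^ 2
    + (-7 : ℝ) * β ^ 6 * a ^ 6 * η ^ 3
    + (38 : ℝ) * β ^ 7 * σb2 ^ 2 * η
    + (1 : ℝ) * β ^ 7 * σb2 ^ 3 * η ^ 3
    + (-56 : ℝ) * β ^ 7 * a * σb2
    + (-18 : ℝ) * β ^ 7 * a * σb2 ^ 2 * η ^ 2
    + (100 : ℝ) * β ^ 7 * a ^ 2 * σb2 * η
    + (-5 : ℝ) * β ^ 7 * a ^ 2 * σb2 ^ 2 * η ^ 3
    + (-20 : ℝ) * β ^ 7 * a ^ 3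
    + (-28 : ℝ) * β ^ 7 * a ^ 3 * σb2 * η ^ 2
    + (38 : ℝ) * β ^ 7 * a ^ 4 * η
    + (-21 : ℝ) * β ^ 7 * a ^ 4 * σb2 * η ^ 3
    + (-6 : ℝ) * β ^ 7 * a ^ 5 * η ^ 2
    + (-15 : ℝ) * β ^ 7 * a ^ 6 * η ^ 3
    + (-25 : ℝ) * β ^ 8 * σb2 ^ 2 * η
    + (56 : ℝ) * β ^ 8 * a * σb2
    + (12 : ℝ) * β ^ 8 * a * σb2 ^ 2 * η ^ 2
    + (-68 : ℝ) * β ^ 8 * a ^ 2 * σb2 * η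
    + (4 : ℝ) * β ^ 8 * a ^ 2 * σb2 ^ 2 * η ^ 3
    + (8 : ℝ) * β ^ 8 * a ^ 3
    + (-11 : ℝ) * β ^ 8 * a ^ 4 * η
    + (4 : ℝ) * β ^ 8 * a ^ 4 * σb2 * η ^ 3
    + (8 : ℝ) * β ^ 9 * σb2 ^ 2 * η
    + (-24 : ℝ) * β ^ 9 * a * σb2
    + (-5 : ℝ) * β ^ 9 * a * σb2 ^ 2 * η ^ 2
    + (20 : ℝ) * β ^ 9 * a ^ 2 * σb2 * η
    + (8 : ℝ) * β ^ 9 * a ^ 3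
    + (6 : ℝ) * β ^ 9 * a ^ 3 * σb2 * η ^ 2
    + (-16 : ℝ) * β ^ 9 * a ^ 4 * η
    + (4 : ℝ) * β ^ 9 * a ^ 4 * σb2 * η ^ 3
    + (3 : ℝ) * β ^ 9 * a ^ 5 * η ^ 2
    + (4 : ℝ) * β ^ 9 * a ^ 6 * η ^ 3
    + (-1 : ℝ) * β ^ 10 * σb2 ^ 2 * η
    + (4 : ℝ) * β ^ 10 * a * σb2
    + (1 : ℝ) * β ^ 10 * a * σb2 ^ 2 * η ^ 2
    + (-2 : ℝ) * β ^ 10 * a ^ 2 * σb2 * η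
    + (-8 : ℝ) * β ^ 10 * a ^ 3
    + (-6 : ℝ) * β ^ 10 * a ^ 3 * σb2 * η ^ 2
    + (15 : ℝ) * β ^ 10 * a ^ 4 * η
    + (-7 : ℝ) * β ^ 10 * a ^ 5 * η ^ 2
    + (2 : ℝ) * β ^ 11 * a ^ 3
    + (2 : ℝ) * β ^ 11 * a ^ 3 * σb2 * η ^ 2
    + (-4 : ℝ) * β ^ 11 * a ^ 4 * η
    + (2 : ℝ) * β ^ 11 * a ^ 5 * η ^ 2

lemma nagP_diff (β a σb2 η x y : ℝ) :
    nagP β a σb2 (η, x) - nagP β a σb2 (η, y) = (x - y) * nagG β a σb2 η x y := by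
  simp only [nagP, nagG]; ring

set_option maxHeartbeats 4000000 in
lemma nagP_key (β a σb2 η : ℝ) (hb : (1 : ℝ) - β ≠ 0) :
    nagP β a σb2 (η, nagQ β a σb2 η) = η ^ 3 * nagS β a σb2 η / (1 - β) ^ 9 := by
  simp only [nagP, nagQ, nagS]
  field_simp
  ring

set_option maxHeartbeats 1000000 in
lemma nagS_continuous (β a σb2 : ℝ) : Continuous (nagS β a σb2) := by
  unfold nagS; fun_prop

set_option maxHeartbeats 1000000 in
/-- For momentum `β ∈ [0,1)`, mean curvature `a` and variance `σ_b² ≥ 0`, the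
Nesterov second-moment characteristic polynomial
`p_η(λ) = λ³ + (βp(η) - (1+β)²q(η))λ² + βq(η)((1+β)²p(η) - β)λ - β³p(η)q(η)`,
with `p(η) = 1 - ηa` and `q(η) = p(η)² + η²σ_b²`, admits near `η = 0` a C¹ branch
of roots `λ⋆` with `λ⋆(0) = 1` and the second-order expansion
`λ⋆(η) = 1 - (2a/(1-β))η + (σ_b²/(1-β)² + ((1-β-2β²)/(1-β)³)a²)η² + O(η³)`. -/
theorem nesterov_dominant_eigenvalue_expansion
    (β a σb2 : ℝ) (hβ0 : 0 ≤ β) (hβ1 : β < 1) (hσ : 0 ≤ σb2)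
    (pchar : ℝ → ℝ → ℝ)
    (hpchar : ∀ η lam : ℝ,
      pchar η lam
        = lam ^ 3
            + (β * (1 - η * a) - (1 + β) ^ 2 * ((1 - η * a) ^ 2 + η ^ 2 * σb2)) * lam ^ 2
            + β * ((1 - η * a) ^ 2 + η ^ 2 * σb2) * ((1 + β) ^ 2 * (1 - η * a) - β) * lam
            - β ^ 3 * (1 - η * a) * ((1 - η * a) ^ 2 + η ^ 2 * σb2)) :
    ∃ ε > (0 : ℝ), ∃ lamStar : ℝ → ℝ,
      ContDiffOn ℝ 1 lamStar (Set.Ioo (-ε) ε) ∧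
      lamStar 0 = 1 ∧
      (∀ η : ℝ, |η| < ε → pchar η (lamStar η) = 0) ∧
      (fun η : ℝ =>
          lamStar η
            - (1 - (2 * a / (1 - β)) * η
                + (σb2 / (1 - β) ^ 2 + ((1 - β - 2 * β ^ 2) / (1 - β) ^ 3) * a ^ 2) * η ^ 2))
        =O[nhds (0 : ℝ)] fun η : ℝ => η ^ 3 := by
  have hb1 : (0:ℝ) < 1 - β := by linarith
  have hb : (1:ℝ) - β ≠ 0 := ne_of_gt hb1
  have hb2 : (0:ℝ) < 1 - β ^ 2 := by nlinarith
  set z0 : ℝ × ℝ := ((0:ℝ), (1:ℝ)) with hz0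
  set Fm : ℝ × ℝ → ℝ × ℝ := fun z => (z.1, nagP β a σb2 z) with hFm
  -- smoothness of Fm
  have hFcd : ContDiffAt ℝ 1 Fm z0 := by
    apply ContDiff.contDiffAt
    apply ContDiff.prodMk contDiff_fst
    unfold nagP; fun_prop
  -- derivative of the second component at z0
  have hfst : HasFDerivAt (Prod.fst : ℝ × ℝ → ℝ) (ContinuousLinearMap.fst ℝ ℝ ℝ) z0 :=
    hasFDerivAt_fst
  have hsnd : HasFDerivAt (Prod.snd : ℝ × ℝ → ℝ) (ContinuousLinearMap.snd ℝ ℝ ℝ) z0 :=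
    hasFDerivAt_snd
  have hp := (hfst.mul_const a).const_sub 1
  have hp2 := (hasDerivAt_pow 2 (1:ℝ)).comp_hasFDerivAt_of_eq z0 hp (by norm_num)
  have hx2 := (hasDerivAt_pow 2 (0:ℝ)).comp_hasFDerivAt_of_eq z0 hfst (by norm_num)
  have hq := hp2.add (hx2.mul_const σb2)
  have hc2 := (hp.const_mul β).sub (hq.const_mul ((1+β)^2))
  have hl2 := (hasDerivAt_pow 2 (1:ℝ)).comp_hasFDerivAt_of_eq z0 hsnd (by norm_num)
  have hl3 := (hasDerivAt_pow 3 (1:ℝ)).comp_hasFDerivAt_of_eq z0 hsnd (by norm_num)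
  have hterm2 := hc2.mul hl2
  have hc1 := (hq.const_mul β).mul ((hp.const_mul ((1+β)^2)).sub_const β)
  have hterm1 := hc1.mul hsnd
  have hc0 := (hp.const_mul (β^3)).mul hq
  have hbig := ((hl3.add hterm2).add hterm1).sub hc0
  have hFbig := hfst.prodMk hbig
  -- the invertible derivative
  set u : ℝ := 2 * a * (1 - β ^ 2) with hu
  set v : ℝ := (1 - β) * (1 - β ^ 2) with hv
  have hvne : v ≠ 0 := by positivity
  set D1 : (ℝ × ℝ) →L[ℝ] (ℝ × ℝ) :=
    (ContinuousLinearMap.fst ℝ ℝ ℝ).prod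
      (u • ContinuousLinearMap.fst ℝ ℝ ℝ + v • ContinuousLinearMap.snd ℝ ℝ ℝ) with hD1
  set D2 : (ℝ × ℝ) →L[ℝ] (ℝ × ℝ) :=
    (ContinuousLinearMap.fst ℝ ℝ ℝ).prod
      ((1/v) • ContinuousLinearMap.snd ℝ ℝ ℝ - (u/v) • ContinuousLinearMap.fst ℝ ℝ ℝ) with hD2
  set L : (ℝ × ℝ) ≃L[ℝ] (ℝ × ℝ) := ContinuousLinearEquiv.equivOfInverse D1 D2
    (fun z => by
      apply Prod.ext <;> simp [hD1, hD2] <;> field_simp <;> ring)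
    (fun z => by
      apply Prod.ext <;> simp [hD1, hD2] <;> field_simp <;> ring) with hL
  have hLD : HasFDerivAt Fm (L : (ℝ × ℝ) →L[ℝ] (ℝ × ℝ)) z0 := by
    refine HasFDerivAt.congr_fderiv hFbig ?_
    refine ContinuousLinearMap.ext fun w => ?_
    have : (L : (ℝ × ℝ) →L[ℝ] (ℝ × ℝ)) w = D1 w := rfl
    rw [this]
    simp [hD1, hz0, Prod.ext_iff, hu, hv]
    ring
  -- local inverse
  have hs := hFcd.hasStrictFDerivAt' hLD one_ne_zero
  set g : ℝ × ℝ → ℝ × ℝ := hs.localInverse Fm L z0 with hg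
  have hFz0 : Fm z0 = ((0:ℝ), (0:ℝ)) := by
    simp [hFm, hz0, nagP, Prod.ext_iff]; ring
  have hgc : ContDiffAt ℝ 1 g ((0:ℝ), (0:ℝ)) := by
    rw [← hFz0]; exact hFcd.to_localInverse hLD one_ne_zero
  have hri : ∀ᶠ y in nhds (((0:ℝ), (0:ℝ)) : ℝ × ℝ), Fm (g y) = y := by
    rw [← hFz0]; exact hs.eventually_right_inverse
  have hga : g ((0:ℝ), (0:ℝ)) = z0 := by rw [← hFz0]; exact hs.localInverse_apply_image
  -- choose ε
  obtain ⟨U, hU, hUc⟩ := hgc.contDiffOn le_rfl (by simp)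
  obtain ⟨δ₁, hδ₁, hball₁⟩ := Metric.mem_nhds_iff.mp hU
  obtain ⟨δ₂, hδ₂, hball₂⟩ := Metric.eventually_nhds_iff_ball.mp hri
  set ε : ℝ := min δ₁ δ₂ with hε
  have hεpos : 0 < ε := lt_min hδ₁ hδ₂
  have hmem : ∀ η : ℝ, |η| < ε → ∀ δ : ℝ, ε ≤ δ →
      ((η, (0:ℝ)) : ℝ × ℝ) ∈ Metric.ball (((0:ℝ),(0:ℝ)) : ℝ × ℝ) δ := by
    intro η hη δ hδ
    have hd : dist ((η, (0:ℝ)) : ℝ × ℝ) (((0:ℝ),(0:ℝ)) : ℝ × ℝ) = |η| := by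
      rw [Prod.dist_eq]
      simp [Real.dist_eq]
    rw [Metric.mem_ball, hd]
    exact lt_of_lt_of_le hη hδ
  set lamStar : ℝ → ℝ := fun η => (g (η, (0:ℝ))).2 with hlam
  refine ⟨ε, hεpos, lamStar, ?_, ?_, ?_, ?_⟩
  · -- ContDiffOn
    refine ContDiff.comp_contDiffOn contDiff_snd ?_
    refine ContDiffOn.comp hUc ((contDiff_id.prodMk contDiff_const).contDiffOn) ?_
    intro η hη
    rw [Set.mem_Ioo] at hη
    exact hball₁ (hmem η (abs_lt.mpr hη) δ₁ (min_le_left _ _))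
  · show (g ((0:ℝ), (0:ℝ))).2 = 1
    rw [hga]
  · intro η hη
    have h := hball₂ _ (hmem η hη δ₂ (min_le_right _ _))
    have h1 : (g (η, (0:ℝ))).1 = η := congrArg Prod.fst h
    have h2 : nagP β a σb2 (g (η, (0:ℝ))) = 0 := congrArg Prod.snd h
    rw [hpchar]
    have hpt : ((η, lamStar η) : ℝ × ℝ) = g (η, (0:ℝ)) := Prod.ext_iff.mpr ⟨h1.symm, rfl⟩
    have : nagP β a σb2 (η, lamStar η) = 0 := by rw [hpt]; exact h2
    simpa [nagP] using this
  · -- the expansion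
    have hroot : ∀ η : ℝ, |η| < ε → nagP β a σb2 (η, lamStar η) = 0 := by
      intro η hη
      have h := hball₂ _ (hmem η hη δ₂ (min_le_right _ _))
      have h1 : (g (η, (0:ℝ))).1 = η := congrArg Prod.fst h
      have h2 : nagP β a σb2 (g (η, (0:ℝ))) = 0 := congrArg Prod.snd h
      have hpt : ((η, lamStar η) : ℝ × ℝ) = g (η, (0:ℝ)) := Prod.ext_iff.mpr ⟨h1.symm, rfl⟩
      rw [hpt]; exact h2
    have hlam0 : lamStar 0 = 1 := by
      show (g ((0:ℝ), (0:ℝ))).2 = 1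
      rw [hga]
    have hlamc : ContinuousAt lamStar 0 := by
      have h1 : ContinuousAt (fun η : ℝ => ((η, (0:ℝ)) : ℝ × ℝ)) 0 :=
        continuousAt_id.prodMk continuousAt_const
      have h2 : ContinuousAt (fun η : ℝ => g (η, (0:ℝ))) 0 :=
        ContinuousAt.comp (f := fun η : ℝ => ((η, (0:ℝ)) : ℝ × ℝ)) hgc.continuousAt h1
      exact continuousAt_snd.comp h2
    have hQc : Continuous (nagQ β a σb2) := by unfold nagQ; fun_prop
    have hQ0 : nagQ β a σb2 0 = 1 := by simp [nagQ]
    set Gc : ℝ → ℝ := fun η => nagG β a σb2 η (lamStar η) (nagQ β a σb2 η) with hGc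
    have hGcont : ContinuousAt Gc 0 := by
      rw [hGc]; unfold nagG
      exact ((((hlamc.pow 2).add (hlamc.mul hQc.continuousAt)).add
        ((hQc.continuousAt).pow 2)).add
        ((Continuous.continuousAt (by fun_prop)).mul (hlamc.add hQc.continuousAt))).add
        (Continuous.continuousAt (by fun_prop))
    have hG0 : Gc 0 = (1 - β) * (1 - β ^ 2) := by
      rw [hGc]; simp only [hlam0, hQ0, nagG]; ring
    have hG0ne : Gc 0 ≠ 0 := by rw [hG0]; positivity
    have hGne : ∀ᶠ η in nhds (0:ℝ), Gc η ≠ 0 := hGcont.eventually_ne hG0ne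
    set φ : ℝ → ℝ := fun η => -(nagS β a σb2 η / (1 - β) ^ 9) / Gc η with hφ
    have hφc : ContinuousAt φ 0 := by
      rw [hφ]
      exact (((nagS_continuous β a σb2).continuousAt.div_const _).neg).div hGcont hG0ne
    have hsmall : ∀ᶠ η in nhds (0:ℝ), |η| < ε := by
      have hIoo : Set.Ioo (-ε) ε ∈ nhds (0:ℝ) := Ioo_mem_nhds (by linarith) hεpos
      filter_upwards [hIoo] with η hη
      exact abs_lt.mpr ⟨hη.1, hη.2⟩
    have hEqEv : (fun η => lamStar η - nagQ β a σb2 η) =ᶠ[nhds (0:ℝ)]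
        fun η => η ^ 3 * φ η := by
      filter_upwards [hGne, hsmall] with η hne hη
      have hd := nagP_diff β a σb2 η (lamStar η) (nagQ β a σb2 η)
      rw [hroot η hη, nagP_key β a σb2 η hb] at hd
      have h5 : (lamStar η - nagQ β a σb2 η) * Gc η
          = -(η ^ 3 * nagS β a σb2 η / (1 - β) ^ 9) := by
        rw [hGc]; linarith [hd]
      have h6 := (eq_div_iff hne).mpr h5
      rw [h6, hφ]
      ring
    have hφO : (fun η : ℝ => φ η) =O[nhds (0:ℝ)] (fun _ => (1:ℝ)) :=
      Filter.Tendsto.isBigO_one ℝ hφc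
    have hbigO : (fun η : ℝ => η ^ 3 * φ η) =O[nhds (0:ℝ)] fun η => η ^ 3 := by
      have h7 := (isBigO_refl (fun η : ℝ => η ^ 3) (nhds (0:ℝ))).mul hφO
      have h8 : (fun η : ℝ => η ^ 3 * 1) = fun η : ℝ => η ^ 3 := by
        funext η; rw [mul_one]
      rwa [h8] at h7
    exact hbigO.congr' hEqEv.symm (Filter.EventuallyEq.refl _ _)
end
end
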